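/- Let V : ℝ³ → ℝ be C¹ and suppose μ₁² ≠ μ₂². If q ∈ ℝ⁴ with A = (q₁q₄ − q₂q₃)/2 ≠ 0 is such that (q, 0) is a critical point of the fully reduced Hamiltonian H (all partial derivatives of H vanish at momenta p = 0), then the solvability condition ν₁q₁q₂ + ν₂q₃q₄ = 0 holds; moreover, writing V₁, V₂, V₃ for the partial derivatives of V evaluated at (q₁²+q₂², q₃²+q₄², q₁q₃+q₂q₄), and I₁ = ν₂q₄² + ν₁q₂², I₂ = ν₁q₁² + ν₂q₃², the equilibrium conditions read: I₁μ₂²q₄/(8A³ν₁ν₂) = 2q₁V₁ + q₃V₃, −I₂μ₁²q₃/(8A³ν₁ν₂) = 2q₂V₁ + q₄V₃, −I₁μ₂²q₂/(8A³ν₁ν₂) = 2q₃V₂ + q₁V₃, and I₂μ₁²q₁/(8A³ν₁ν₂) = 2q₄V₂ + q₂V₃. -/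

import Mathlib

noncomputable section

/-- `f(q_i, q_j, L₃) = ((L_d + L_s)²q_i² + (L_d − L_s)²q_j²)/(16A²)`,
with `L_d = √(Δ² − L₃²)`, `L_s = √(Σ² − L₃²)`, `Δ = μ₁ − μ₂`, `Σ = μ₁ + μ₂`. -/
def fred (μ₁ μ₂ A qi qj L₃ : ℝ) : ℝ :=
  let Ld := Real.sqrt ((μ₁ - μ₂) ^ 2 - L₃ ^ 2)
  let Ls := Real.sqrt ((μ₁ + μ₂) ^ 2 - L₃ ^ 2)
  ((Ld + Ls) ^ 2 * qi ^ 2 + (Ld - Ls) ^ 2 * qj ^ 2) / (16 * A ^ 2)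

/-- The fully reduced Hamiltonian of the three-body problem in `ℝ⁴` on the phase space
`ℝ⁴ × ℝ⁴` (positions `q`, momenta `p`). -/
def Hred (ν₁ ν₂ μ₁ μ₂ : ℝ) (V : (Fin 3 → ℝ) → ℝ) (z : (Fin 4 → ℝ) × (Fin 4 → ℝ)) : ℝ :=
  let q := z.1; let p := z.2
  let A := (q 0 * q 3 - q 1 * q 2) / 2
  let L₃ := q 0 * p 1 - q 1 * p 0 + q 2 * p 3 - q 3 * p 2
  (1 / (2 * ν₁)) * (p 0 ^ 2 + p 1 ^ 2 + fred μ₁ μ₂ A (q 2) (q 3) L₃) +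
    (1 / (2 * ν₂)) * (p 2 ^ 2 + p 3 ^ 2 + fred μ₁ μ₂ A (q 0) (q 1) L₃) +
    V ![q 0 ^ 2 + q 1 ^ 2, q 2 ^ 2 + q 3 ^ 2, q 0 * q 2 + q 1 * q 3]

/-! At zero momentum `L₃ = 0`, so `L_d = μ₁ - μ₂`, `L_s = μ₁ + μ₂`, and `H(q, 0)` is the amended
potential `U(q) = K(q) / (2ν₁ν₂D²) + V(gram q)`, where `D = 2A` and `K` is a quadratic form; `H` is
differentiable at `(q, 0)` since both square roots have positive arguments there. So every
directional derivative of `U` at `q` vanishes. As `K`, `D` and the Gram entries are quadratic,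
differentiating along `t ↦ q + t v` gives `K'(v) D - 2 K D'(v) + 2ν₁ν₂D³ dV(gram'(v)) = 0`.
The simultaneous rotation `v = (q₂, -q₁, q₄, -q₃)` of both planes leaves `D` and the Gram entries
invariant, which leaves `2(μ₁² - μ₂²)(ν₁q₁q₂ + ν₂q₃q₄) D = 0`, the solvability condition; the
coordinate directions then give the four equilibrium conditions. -/

@[fun_prop]
theorem DifferentiableAt.matrixVecCons {𝕜 E F : Type*} [NontriviallyNormedField 𝕜]
    [NormedAddCommGroup E] [NormedSpace 𝕜 E] [NormedAddCommGroup F] [NormedSpace 𝕜 F] {n : ℕ}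
    {f : E → F} {g : E → Fin n → F} {x : E}
    (hf : DifferentiableAt 𝕜 f x) (hg : DifferentiableAt 𝕜 g x) :
    DifferentiableAt 𝕜 (fun y => Matrix.vecCons (f y) (g y)) x :=
  hf.finCons hg

theorem hasDerivAt_zero_of_eq_quadratic {F : Type*} [NormedAddCommGroup F] [NormedSpace ℝ F]
    {f : ℝ → F} {a b c : F} (hf : ∀ t, f t = a + t • b + t ^ 2 • c) : HasDerivAt f b 0 := by
  have h := (((hasDerivAt_id' (0 : ℝ)).smul_const b).const_add a).add
    ((hasDerivAt_pow 2 (0 : ℝ)).smul_const c)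
  exact (h.congr_deriv (by simp)).congr_of_eventuallyEq (.of_forall hf)

theorem ContinuousLinearMap.apply_vec3 {M : Type*} [AddCommGroup M] [Module ℝ M]
    [TopologicalSpace M] (L : (Fin 3 → ℝ) →L[ℝ] M) (a b c : ℝ) :
    L ![a, b, c] = a • L (Pi.single 0 1) + b • L (Pi.single 1 1) + c • L (Pi.single 2 1) := by
  have h : (![a, b, c] : Fin 3 → ℝ) =
      a • Pi.single 0 1 + b • Pi.single 1 1 + c • Pi.single 2 1 := by
    ext i; fin_cases i <;> simp
  simp [h]

theorem fred_zero {μ₁ μ₂ : ℝ} (hμ : |μ₂| ≤ μ₁) (A qi qj : ℝ) :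
    fred μ₁ μ₂ A qi qj 0 = (μ₁ ^ 2 * qi ^ 2 + μ₂ ^ 2 * qj ^ 2) / (4 * A ^ 2) := by
  obtain ⟨h₁, h₂⟩ := abs_le.mp hμ
  simp only [fred, ne_eq, OfNat.ofNat_ne_zero, not_false_eq_true, zero_pow, sub_zero]
  rw [Real.sqrt_sq (by linarith), Real.sqrt_sq (by linarith)]
  ring

def twiceArea (q : Fin 4 → ℝ) : ℝ := q 0 * q 3 - q 1 * q 2

def gram (q : Fin 4 → ℝ) : Fin 3 → ℝ :=
  ![q 0 ^ 2 + q 1 ^ 2, q 2 ^ 2 + q 3 ^ 2, q 0 * q 2 + q 1 * q 3]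

def centrifugalForm (ν₁ ν₂ μ₁ μ₂ : ℝ) (q : Fin 4 → ℝ) : ℝ :=
  ν₂ * (μ₁ ^ 2 * q 2 ^ 2 + μ₂ ^ 2 * q 3 ^ 2) + ν₁ * (μ₁ ^ 2 * q 0 ^ 2 + μ₂ ^ 2 * q 1 ^ 2)

def amendedPotential (ν₁ ν₂ μ₁ μ₂ : ℝ) (V : (Fin 3 → ℝ) → ℝ) (q : Fin 4 → ℝ) : ℝ :=
  centrifugalForm ν₁ ν₂ μ₁ μ₂ q / (2 * ν₁ * ν₂ * twiceArea q ^ 2) + V (gram q)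

def twiceAreaPolar (q v : Fin 4 → ℝ) : ℝ := q 0 * v 3 + v 0 * q 3 - q 1 * v 2 - v 1 * q 2

def gramPolar (q v : Fin 4 → ℝ) : Fin 3 → ℝ :=
  ![2 * (q 0 * v 0 + q 1 * v 1), 2 * (q 2 * v 2 + q 3 * v 3),
    q 0 * v 2 + v 0 * q 2 + q 1 * v 3 + v 1 * q 3]

def centrifugalFormPolar (ν₁ ν₂ μ₁ μ₂ : ℝ) (q v : Fin 4 → ℝ) : ℝ :=
  2 * ν₂ * (μ₁ ^ 2 * q 2 * v 2 + μ₂ ^ 2 * q 3 * v 3) +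
    2 * ν₁ * (μ₁ ^ 2 * q 0 * v 0 + μ₂ ^ 2 * q 1 * v 1)

theorem twiceArea_add_smul (q v : Fin 4 → ℝ) (t : ℝ) :
    twiceArea (q + t • v) = twiceArea q + t • twiceAreaPolar q v + t ^ 2 • twiceArea v := by
  simp only [twiceArea, twiceAreaPolar, Pi.add_apply, Pi.smul_apply, smul_eq_mul]
  ring

theorem gram_add_smul (q v : Fin 4 → ℝ) (t : ℝ) :
    gram (q + t • v) = gram q + t • gramPolar q v + t ^ 2 • gram v := by
  ext i
  fin_cases i <;> simp [gram, gramPolar] <;> ring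

theorem centrifugalForm_add_smul (ν₁ ν₂ μ₁ μ₂ : ℝ) (q v : Fin 4 → ℝ) (t : ℝ) :
    centrifugalForm ν₁ ν₂ μ₁ μ₂ (q + t • v) = centrifugalForm ν₁ ν₂ μ₁ μ₂ q +
      t • centrifugalFormPolar ν₁ ν₂ μ₁ μ₂ q v + t ^ 2 • centrifugalForm ν₁ ν₂ μ₁ μ₂ v := by
  simp only [centrifugalForm, centrifugalFormPolar, Pi.add_apply, Pi.smul_apply, smul_eq_mul]
  ring

section Hred

variable {ν₁ ν₂ μ₁ μ₂ : ℝ} {V : (Fin 3 → ℝ) → ℝ} {q : Fin 4 → ℝ}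

theorem Hred_zero_momentum (hν₁ : ν₁ ≠ 0) (hν₂ : ν₂ ≠ 0) (hμ : |μ₂| ≤ μ₁) :
    Hred ν₁ ν₂ μ₁ μ₂ V (q, 0) = amendedPotential ν₁ ν₂ μ₁ μ₂ V q := by
  simp only [Hred, amendedPotential, Pi.zero_apply, mul_zero, sub_zero, add_zero, zero_add,
    ne_eq, OfNat.ofNat_ne_zero, not_false_eq_true, zero_pow, fred_zero hμ]
  congr 1
  simp only [centrifugalForm, twiceArea]
  rcases eq_or_ne (q 0 * q 3 - q 1 * q 2) 0 with hD | hD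
  · -- both sides divide by zero
    simp [hD]
  · field_simp
    ring

theorem differentiableAt_Hred (hμ : |μ₂| < μ₁) (hV : Differentiable ℝ V)
    (hD : twiceArea q ≠ 0) : DifferentiableAt ℝ (Hred ν₁ ν₂ μ₁ μ₂ V) (q, 0) := by
  obtain ⟨h₁, h₂⟩ := abs_lt.mp hμ
  have hdiff : μ₁ - μ₂ ≠ 0 := by linarith
  have hsum : μ₁ + μ₂ ≠ 0 := by linarith
  unfold Hred fred
  unfold twiceArea at hD
  fun_prop (disch := simp_all)

theorem hasDerivAt_amendedPotential_line (hν₁ : ν₁ ≠ 0) (hν₂ : ν₂ ≠ 0) (hμ : |μ₂| < μ₁)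
    (hV : Differentiable ℝ V) (hD : twiceArea q ≠ 0)
    (hcrit : fderiv ℝ (Hred ν₁ ν₂ μ₁ μ₂ V) (q, 0) = 0) (v : Fin 4 → ℝ) :
    HasDerivAt (fun t : ℝ => amendedPotential ν₁ ν₂ μ₁ μ₂ V (q + t • v)) 0 0 := by
  have hH : HasFDerivAt (Hred ν₁ ν₂ μ₁ μ₂ V) (0 : _ →L[ℝ] ℝ) (q, 0) :=
    hcrit ▸ (differentiableAt_Hred hμ hV hD).hasFDerivAt
  have hline : HasDerivAt (fun t : ℝ => (q + t • v, (0 : Fin 4 → ℝ))) (v, 0) 0 := by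
    simpa using (((hasDerivAt_id' (0 : ℝ)).smul_const v).const_add q).prodMk
      (hasDerivAt_const (0 : ℝ) (0 : Fin 4 → ℝ))
  simpa [Function.comp_def, Hred_zero_momentum hν₁ hν₂ hμ.le] using
    hH.comp_hasDerivAt_of_eq 0 hline (by simp)

theorem amendedPotential_critical_identity (hν₁ : ν₁ ≠ 0) (hν₂ : ν₂ ≠ 0)
    (hV : DifferentiableAt ℝ V (gram q)) (hD : twiceArea q ≠ 0) {v : Fin 4 → ℝ}
    (hcrit : HasDerivAt (fun t : ℝ => amendedPotential ν₁ ν₂ μ₁ μ₂ V (q + t • v)) 0 0) :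
    centrifugalFormPolar ν₁ ν₂ μ₁ μ₂ q v * twiceArea q -
      2 * centrifugalForm ν₁ ν₂ μ₁ μ₂ q * twiceAreaPolar q v +
      2 * ν₁ * ν₂ * twiceArea q ^ 3 * fderiv ℝ V (gram q) (gramPolar q v) = 0 := by
  have hK := hasDerivAt_zero_of_eq_quadratic (centrifugalForm_add_smul ν₁ ν₂ μ₁ μ₂ q v)
  have hArea := hasDerivAt_zero_of_eq_quadratic (twiceArea_add_smul q v)
  have hGram := hasDerivAt_zero_of_eq_quadratic (gram_add_smul q v)
  have hden : 2 * ν₁ * ν₂ * twiceArea (q + (0 : ℝ) • v) ^ 2 ≠ 0 := by simp [*]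
  have hU := (hK.div ((hArea.pow 2).const_mul (2 * ν₁ * ν₂)) hden).add
    (hV.hasFDerivAt.comp_hasDerivAt_of_eq 0 hGram (by simp))
  have h := hcrit.unique hU
  simp only [zero_smul, add_zero, Pi.pow_apply, Nat.cast_ofNat, Nat.add_one_sub_one,
    pow_one] at h
  field_simp at h
  linear_combination -h

end Hred

/-- For a general potential, a zero-momentum critical point of the fully reduced
Hamiltonian satisfies the solvability condition `ν₁q₁q₂ + ν₂q₃q₄ = 0` and the four
equilibrium conditions of Lemma 7. -/
theorem general_equilibrium_conditions (ν₁ ν₂ μ₁ μ₂ : ℝ) (hν₁ : 0 < ν₁)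
    (hν₂ : 0 < ν₂) (hμ : μ₁ > μ₂) (hμ₂ : 0 ≤ μ₂) (hμμ : μ₁ ^ 2 ≠ μ₂ ^ 2)
    (V : (Fin 3 → ℝ) → ℝ) (hV : ContDiff ℝ 1 V) (q : Fin 4 → ℝ)
    (hA : (q 0 * q 3 - q 1 * q 2) / 2 ≠ 0)
    (hcrit : fderiv ℝ (Hred ν₁ ν₂ μ₁ μ₂ V) (q, (0 : Fin 4 → ℝ)) = 0) :
    (let A := (q 0 * q 3 - q 1 * q 2) / 2
     let s : Fin 3 → ℝ := ![q 0 ^ 2 + q 1 ^ 2, q 2 ^ 2 + q 3 ^ 2, q 0 * q 2 + q 1 * q 3]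
     let V₁ := fderiv ℝ V s (Pi.single 0 1)
     let V₂ := fderiv ℝ V s (Pi.single 1 1)
     let V₃ := fderiv ℝ V s (Pi.single 2 1)
     let I₁ := ν₂ * q 3 ^ 2 + ν₁ * q 1 ^ 2
     let I₂ := ν₁ * q 0 ^ 2 + ν₂ * q 2 ^ 2
     ν₁ * q 0 * q 1 + ν₂ * q 2 * q 3 = 0 ∧
     I₁ * μ₂ ^ 2 * q 3 / (8 * A ^ 3 * ν₁ * ν₂) = 2 * q 0 * V₁ + q 2 * V₃ ∧
     -(I₂ * μ₁ ^ 2 * q 2) / (8 * A ^ 3 * ν₁ * ν₂) = 2 * q 1 * V₁ + q 3 * V₃ ∧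
     -(I₁ * μ₂ ^ 2 * q 1) / (8 * A ^ 3 * ν₁ * ν₂) = 2 * q 2 * V₂ + q 0 * V₃ ∧
     I₂ * μ₁ ^ 2 * q 0 / (8 * A ^ 3 * ν₁ * ν₂) = 2 * q 3 * V₂ + q 1 * V₃) := by
  dsimp only
  have hD : twiceArea q ≠ 0 := by simpa [twiceArea] using hA
  have hVd : Differentiable ℝ V := hV.differentiable one_ne_zero
  have hμ' : |μ₂| < μ₁ := abs_lt.mpr ⟨by linarith, hμ⟩
  have E (v : Fin 4 → ℝ) := amendedPotential_critical_identity hν₁.ne' hν₂.ne' (hVd _) hD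
    (hasDerivAt_amendedPotential_line hν₁.ne' hν₂.ne' hμ' hVd hD hcrit v)
  have hrot := E ![q 1, -q 0, q 3, -q 2]
  have E₀ := E ![1, 0, 0, 0]
  have E₁ := E ![0, 1, 0, 0]
  have E₂ := E ![0, 0, 1, 0]
  have E₃ := E ![0, 0, 0, 1]
  simp only [centrifugalForm, centrifugalFormPolar, twiceArea, twiceAreaPolar, gram, gramPolar,
    Matrix.cons_val, Matrix.cons_val_zero, Matrix.cons_val_one, ContinuousLinearMap.apply_vec3,
    smul_eq_mul]
    at hrot E₀ E₁ E₂ E₃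
  have hS : ν₁ * q 0 * q 1 + ν₂ * q 2 * q 3 = 0 := by
    have h : 2 * (μ₁ ^ 2 - μ₂ ^ 2) * (q 0 * q 3 - q 1 * q 2) *
        (ν₁ * q 0 * q 1 + ν₂ * q 2 * q 3) = 0 := by
      linear_combination hrot
    exact (mul_eq_zero.mp h).resolve_left
      (mul_ne_zero (mul_ne_zero two_ne_zero (sub_ne_zero.mpr hμμ)) hD)
  have h8 : 8 * ((q 0 * q 3 - q 1 * q 2) / 2) ^ 3 * ν₁ * ν₂ ≠ 0 := by positivity
  refine ⟨hS, ?_, ?_, ?_, ?_⟩ <;> rw [div_eq_iff h8]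
  · linear_combination (-1 / 2 : ℝ) * E₀ - μ₁ ^ 2 * q 2 * hS
  · linear_combination (-1 / 2 : ℝ) * E₁ + μ₂ ^ 2 * q 3 * hS
  · linear_combination (-1 / 2 : ℝ) * E₂ + μ₁ ^ 2 * q 0 * hS
  · linear_combination (-1 / 2 : ℝ) * E₃ - μ₂ ^ 2 * q 1 * hS

end
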